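/- arXiv:2510.19038 — 4 statements merged into one kernel-verified Lean document; each statement's English description precedes it below -/
import Mathlib

section
/- Let r > 0 be fixed and let g : ℝ² → ℂ be the spherical wave g(x) = exp(2πi r ‖x‖). Then for every x ∈ ℝ² the limit lim_{R→∞} (1/(πR²)) ∫_{B_R} g(y) · conj(g(y − x)) dy exists and equals ∑_{m=0}^∞ (−1)^m (π r ‖x‖)^{2m} / (m!)², i.e. the Bessel function J₀(2π r ‖x‖). -/
/-!
Write `c = 2πr`; the integrand is `exp (i c (‖y‖ - ‖y - x‖))`. Substituting `y = R z` turns the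
average over `B_R` into `π⁻¹ ∫_{B_1} exp (i c (‖R z‖ - ‖R z - x‖)) dz`, and `‖R z‖ - ‖R z - x‖`
tends to `⟪x, z⟫ / ‖z‖`, the derivative of the norm at `z` in the direction `x`. By dominated
convergence the limit is `π⁻¹ ∫_{B_1} exp (i c ⟪x, z⟫ / ‖z‖) dz`, which in polar coordinates is
`(2π)⁻¹ ∫_{-π}^{π} exp (i c ‖x‖ cos θ) dθ`. Integrating the exponential series termwise, with
`∫_0^{2π} cos^{2m} = 2π (2m)! / (4^m (m!)^2)` and the odd powers integrating to zero, gives the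
power series of `J₀(c‖x‖)`.
-/

open MeasureTheory Filter Complex Set Module
open scoped Real Topology Nat

noncomputable def besselJ0 (x : ℝ) : ℝ :=
  ∑' m : ℕ, (-1) ^ m * (x / 2) ^ (2 * m) / (m ! : ℝ) ^ 2

theorem integral_zero_two_pi_cos_pow_add_two (n : ℕ) :
    ∫ θ in (0 : ℝ)..2 * π, Real.cos θ ^ (n + 2) =
      (n + 1) / (n + 2) * ∫ θ in (0 : ℝ)..2 * π, Real.cos θ ^ n := by
  simp [integral_cos_pow]

theorem integral_zero_two_pi_cos_pow_odd (m : ℕ) :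
    ∫ θ in (0 : ℝ)..2 * π, Real.cos θ ^ (2 * m + 1) = 0 := by
  induction m with
  | zero => simp
  | succ m ih =>
    rw [show 2 * (m + 1) + 1 = 2 * m + 1 + 2 by ring, integral_zero_two_pi_cos_pow_add_two, ih,
      mul_zero]

theorem integral_zero_two_pi_cos_pow_even (m : ℕ) :
    ∫ θ in (0 : ℝ)..2 * π, Real.cos θ ^ (2 * m) =
      2 * π * (2 * m)! / (4 ^ m * (m ! : ℝ) ^ 2) := by
  induction m with
  | zero => simp
  | succ m ih =>
    rw [show 2 * (m + 1) = 2 * m + 2 by ring, integral_zero_two_pi_cos_pow_add_two, ih,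
      Nat.factorial_succ, Nat.factorial_succ, Nat.factorial_succ]
    push_cast
    field_simp
    ring

theorem hasSum_integral_exp_mul_I_cos (b : ℝ) :
    HasSum (fun n : ℕ => (b * I) ^ n / n ! * ((∫ θ in (0 : ℝ)..2 * π, Real.cos θ ^ n : ℝ) : ℂ))
      (∫ θ in (0 : ℝ)..2 * π, exp (b * I * Real.cos θ)) := by
  have hterm (n : ℕ) : ∫ θ in (0 : ℝ)..2 * π, (b * I * Real.cos θ) ^ n / n ! =
      (b * I) ^ n / n ! * ((∫ θ in (0 : ℝ)..2 * π, Real.cos θ ^ n : ℝ) : ℂ) := by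
    rw [← intervalIntegral.integral_ofReal, ← intervalIntegral.integral_const_mul]
    push_cast
    congr 1 with θ
    ring
  simp_rw [← hterm]
  refine intervalIntegral.hasSum_integral_of_dominated_convergence
    (fun n _ => |b| ^ n / n !) (fun n => by fun_prop) (fun n => ae_of_all _ fun θ _ => ?_)
    (ae_of_all _ fun _ _ => Real.summable_pow_div_factorial |b|) intervalIntegrable_const
    (ae_of_all _ fun θ _ => exp_eq_exp_ℂ ▸ NormedSpace.expSeries_div_hasSum_exp _)
  rw [norm_div, norm_pow, norm_mul, norm_mul, Complex.norm_real, Complex.norm_real,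
    Complex.norm_I, mul_one, Complex.norm_natCast, Real.norm_eq_abs, Real.norm_eq_abs]
  gcongr
  exact mul_le_of_le_one_right (abs_nonneg b) (Real.abs_cos_le_one θ)

theorem integral_exp_mul_I_cos (b : ℝ) :
    ∫ θ in (0 : ℝ)..2 * π, exp (b * I * Real.cos θ) = 2 * π * besselJ0 b := by
  have hodd : ∀ n ∉ range (2 * ·), (b * I) ^ n / n ! *
      ((∫ θ in (0 : ℝ)..2 * π, Real.cos θ ^ n : ℝ) : ℂ) = 0 := by
    intro n hn
    obtain ⟨m, rfl⟩ : Odd n :=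
      Nat.not_even_iff_odd.mp fun ⟨m, hm⟩ => hn ⟨m, show 2 * m = n by omega⟩
    rw [integral_zero_two_pi_cos_pow_odd, ofReal_zero, mul_zero]
  have heven (m : ℕ) : (b * I) ^ (2 * m) / (2 * m)! *
      ((∫ θ in (0 : ℝ)..2 * π, Real.cos θ ^ (2 * m) : ℝ) : ℂ) =
      ((2 * π * ((-1) ^ m * (b / 2) ^ (2 * m) / (m ! : ℝ) ^ 2) : ℝ) : ℂ) := by
    have h4 : (4 : ℂ) ^ m = 2 ^ (2 * m) := by rw [pow_mul]; norm_num
    have : ((2 * m)! : ℂ) ≠ 0 := by exact_mod_cast (2 * m).factorial_ne_zero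
    rw [integral_zero_two_pi_cos_pow_even, mul_pow, pow_mul I, I_sq]
    push_cast
    rw [h4, div_pow]
    field_simp
  have hsum := ((mul_right_injective₀ two_ne_zero).hasSum_iff hodd).mpr
    (hasSum_integral_exp_mul_I_cos b)
  simp only [Function.comp_def, heven] at hsum
  rw [← hsum.tsum_eq, ← ofReal_tsum, tsum_mul_left, besselJ0]
  push_cast
  rfl

theorem setIntegral_Ioo_exp_mul_I_cos_sub (b a : ℝ) :
    ∫ θ in Ioo (-π) π, exp (b * I * Real.cos (θ - a)) = 2 * π * besselJ0 b := by
  have hper : Function.Periodic (fun θ : ℝ => exp (b * I * Real.cos θ)) (2 * π) := by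
    intro θ
    simp [Real.cos_add_two_pi]
  rw [← integral_Ioc_eq_integral_Ioo,
    ← intervalIntegral.integral_of_le (by linarith [Real.pi_pos]),
    intervalIntegral.integral_comp_sub_right (fun θ => exp (b * I * Real.cos θ)),
    ← integral_exp_mul_I_cos, ← zero_add (2 * π), ← hper.intervalIntegral_add_eq (-π - a) 0]
  ring_nf

namespace Complex

theorem setIntegral_closedBall_zero_eq_polarCoord {E : Type*} [NormedAddCommGroup E]
    [NormedSpace ℝ E] (f : ℂ → E) (R : ℝ) :
    ∫ w in Metric.closedBall (0 : ℂ) R, f w =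
      ∫ p in Ioc 0 R ×ˢ Ioo (-π) π, p.1 • f (Complex.polarCoord.symm p) := by
  have hmem (p : ℝ × ℝ) (hp : p ∈ polarCoord.target) :
      Complex.polarCoord.symm p ∈ Metric.closedBall 0 R ↔ p.1 ≤ R := by
    rw [mem_closedBall_zero_iff, norm_polarCoord_symm, abs_of_pos hp.1]
  rw [← integral_indicator Metric.isClosed_closedBall.measurableSet,
    ← Complex.integral_comp_polarCoord_symm,
    setIntegral_eq_of_subset_of_forall_sdiff_eq_zero (s := Ioc 0 R ×ˢ Ioo (-π) π)
      polarCoord.open_target.measurableSet fun p hp => ⟨Ioc_subset_Ioi_self hp.1, hp.2⟩]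
  · refine setIntegral_congr_fun (measurableSet_Ioc.prod measurableSet_Ioo) fun p hp => ?_
    rw [indicator_of_mem ((hmem p ⟨Ioc_subset_Ioi_self hp.1, hp.2⟩).2 hp.1.2)]
  · rintro p ⟨hp, hpS⟩
    have hR : ¬ p.1 ≤ R := fun h => hpS ⟨⟨hp.1, h⟩, hp.2⟩
    rw [indicator_of_notMem (fun h => hR ((hmem p hp).1 h)), smul_zero]

theorem integral_closedBall_exp_inner_div_norm (c : ℝ) (v : ℂ) :
    ∫ w in Metric.closedBall (0 : ℂ) 1, exp (c * I * ↑(inner ℝ v w / ‖w‖)) =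
      π * besselJ0 (c * ‖v‖) := by
  have hpolar (p : ℝ × ℝ) (hp : p ∈ Ioc 0 1 ×ˢ Ioo (-π) π) :
      p.1 • exp (c * I * ↑(inner ℝ v (Complex.polarCoord.symm p) / ‖Complex.polarCoord.symm p‖)) =
        (p.1 : ℂ) * exp ((c * ‖v‖ : ℝ) * I * Real.cos (p.2 - v.arg)) := by
    have hρ : 0 < p.1 := hp.1.1
    have hinner : inner ℝ v (Complex.polarCoord.symm p) / ‖Complex.polarCoord.symm p‖ =
        ‖v‖ * Real.cos (p.2 - v.arg) := by
      rw [Complex.inner, norm_polarCoord_symm, abs_of_pos hρ, Real.cos_sub]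
      have hre := norm_mul_cos_arg v
      have him := norm_mul_sin_arg v
      simp only [Complex.polarCoord_symm_apply, mul_re, conj_re, conj_im, ofReal_re, ofReal_im,
        add_re, add_im, mul_im, I_re, I_im]
      field_simp
      rw [← hre, ← him]
      ring
    rw [hinner, real_smul]
    push_cast
    ring_nf
  rw [setIntegral_closedBall_zero_eq_polarCoord,
    setIntegral_congr_fun (measurableSet_Ioc.prod measurableSet_Ioo) hpolar,
    Measure.volume_eq_prod, setIntegral_prod_mul (fun ρ : ℝ => (ρ : ℂ))
      (fun θ : ℝ => exp ((c * ‖v‖ : ℝ) * I * Real.cos (θ - v.arg))),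
    setIntegral_Ioo_exp_mul_I_cos_sub, ← intervalIntegral.integral_of_le zero_le_one,
    intervalIntegral.integral_ofReal]
  norm_num
  ring

end Complex

theorem setIntegral_closedBall_zero_eq_pow_smul {E F : Type*} [NormedAddCommGroup E]
    [NormedSpace ℝ E] [FiniteDimensional ℝ E] [MeasurableSpace E] [BorelSpace E]
    [NormedAddCommGroup F] [NormedSpace ℝ F] (μ : Measure E) [μ.IsAddHaarMeasure] (f : E → F)
    {R : ℝ} (hR : 0 < R) :
    ∫ y in Metric.closedBall 0 R, f y ∂μ =
      R ^ finrank ℝ E • ∫ z in Metric.closedBall 0 1, f (R • z) ∂μ := by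
  rw [Measure.setIntegral_comp_smul_of_pos μ f _ hR, smul_unitClosedBall_of_nonneg hR.le,
    smul_inv_smul₀ (pow_ne_zero _ hR.ne')]

section InnerProductSpace

variable {E : Type*} [NormedAddCommGroup E] [InnerProductSpace ℝ E]

theorem hasDerivAt_norm_sub_smul (x : E) {z : E} (hz : z ≠ 0) :
    HasDerivAt (fun t : ℝ => ‖z - t • x‖) (-(inner ℝ z x / ‖z‖)) 0 := by
  have h := (((hasDerivAt_id (0 : ℝ)).smul_const x).const_sub z).norm_sq.sqrt
    (by simpa using hz)
  simp only [Real.sqrt_sq (norm_nonneg _), id, zero_smul, sub_zero, one_smul,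
    inner_neg_right] at h
  convert h using 1
  field_simp

theorem tendsto_norm_smul_sub_norm_smul_sub (x : E) {z : E} (hz : z ≠ 0) :
    Tendsto (fun R : ℝ => ‖R • z‖ - ‖R • z - x‖) atTop (𝓝 (inner ℝ x z / ‖z‖)) := by
  have h := ((hasDerivAt_norm_sub_smul x hz).tendsto_slope_zero_right.comp
    tendsto_inv_atTop_nhdsGT_zero).neg
  rw [neg_neg, real_inner_comm] at h
  refine h.congr' ?_
  filter_upwards [eventually_gt_atTop 0] with R hR
  have hRz : R • z - x = R • (z - R⁻¹ • x) := by rw [smul_sub, smul_inv_smul₀ hR.ne']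
  simp only [Function.comp_def, zero_add, zero_smul, sub_zero, inv_inv, smul_eq_mul, hRz,
    norm_smul, Real.norm_of_nonneg hR.le]
  ring

theorem tendsto_setIntegral_exp_mul_I_norm_smul_sub [MeasurableSpace E] [BorelSpace E]
    {μ : Measure E} [NullSingletonClass μ] {s : Set E} (hs : μ s ≠ ⊤) (c : ℝ) (x : E) :
    Tendsto (fun R : ℝ => ∫ z in s, exp (c * I * ↑(‖R • z‖ - ‖R • z - x‖)) ∂μ) atTop
      (𝓝 (∫ z in s, exp (c * I * ↑(inner ℝ x z / ‖z‖)) ∂μ)) := by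
  have hexp : Continuous fun t : ℝ => exp (c * I * t) := by fun_prop
  refine tendsto_integral_filter_of_dominated_convergence (fun _ => 1)
    (Eventually.of_forall fun R => (hexp.comp (by fun_prop)).aestronglyMeasurable)
    (Eventually.of_forall fun R => ae_of_all _ fun z => ?_) (integrableOn_const hs)
    (ae_restrict_of_ae ((Measure.ae_ne μ 0).mono fun z hz =>
      (hexp.tendsto _).comp (tendsto_norm_smul_sub_norm_smul_sub x hz)))
  simp [norm_exp]

theorem integral_closedBall_exp_inner_div_norm [FiniteDimensional ℝ E] [MeasurableSpace E]
    [BorelSpace E] (hE : finrank ℝ E = 2) (c : ℝ) (x : E) :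
    ∫ z in Metric.closedBall (0 : E) 1, exp (c * I * ↑(inner ℝ x z / ‖z‖)) =
      π * besselJ0 (c * ‖x‖) := by
  let e : E ≃ₗᵢ[ℝ] ℂ :=
    (Complex.isometryOfOrthonormal ((stdOrthonormalBasis ℝ E).reindex (finCongr hE))).symm
  have h := e.measurePreserving.setIntegral_preimage_emb e.toMeasurableEquiv.measurableEmbedding
    (fun w => exp (c * I * ↑(inner ℝ (e x) w / ‖w‖))) (Metric.closedBall 0 1)
  simp only [LinearIsometryEquiv.preimage_closedBall, map_zero,
    LinearIsometryEquiv.inner_map_map, LinearIsometryEquiv.norm_map] at h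
  rw [← e.norm_map x, ← Complex.integral_closedBall_exp_inner_div_norm, ← h]

end InnerProductSpace

theorem autocorrelation_spherical_wave_plane_general
    (r : ℝ)
    (g : EuclideanSpace ℝ (Fin 2) → ℂ)
    (hg : ∀ x, g x = Complex.exp (2 * Real.pi * Complex.I * r * ‖x‖)) :
    ∀ x : EuclideanSpace ℝ (Fin 2),
      Tendsto
        (fun R : ℝ =>
          (∫ y in Metric.closedBall (0 : EuclideanSpace ℝ (Fin 2)) R,
              g y * (starRingEnd ℂ) (g (y - x))) /
            ((Real.pi * R ^ 2 : ℝ) : ℂ))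
        atTop
        (𝓝 ((∑' m : ℕ, (-1) ^ m * (Real.pi * r * ‖x‖) ^ (2 * m) /
              ((Nat.factorial m : ℝ) ^ 2) : ℝ) : ℂ)) := by
  intro x
  have hwave (y : EuclideanSpace ℝ (Fin 2)) :
      g y * (starRingEnd ℂ) (g (y - x)) = exp ((2 * π * r : ℝ) * I * ↑(‖y‖ - ‖y - x‖)) := by
    rw [hg, hg, ← exp_conj, ← exp_add]
    simp only [map_mul, conj_I, conj_ofReal, map_ofNat]
    push_cast
    ring_nf
  have hJ : besselJ0 (2 * π * r * ‖x‖) =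
      ∑' m : ℕ, (-1) ^ m * (π * r * ‖x‖) ^ (2 * m) / (m ! : ℝ) ^ 2 := by
    rw [besselJ0, show 2 * π * r * ‖x‖ / 2 = π * r * ‖x‖ by ring]
  have hlim := (tendsto_setIntegral_exp_mul_I_norm_smul_sub
    (measure_closedBall_lt_top (μ := volume) (x := 0) (r := 1)).ne (2 * π * r) x).div_const (π : ℂ)
  rw [integral_closedBall_exp_inner_div_norm (finrank_euclideanSpace_fin), hJ,
    mul_div_cancel_left₀ _ (ofReal_ne_zero.2 Real.pi_ne_zero)] at hlim
  refine hlim.congr' ?_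
  filter_upwards [eventually_gt_atTop 0] with R hR
  have hR' : (R : ℂ) ≠ 0 := ofReal_ne_zero.2 hR.ne'
  simp only [hwave]
  rw [setIntegral_closedBall_zero_eq_pow_smul volume _ hR, finrank_euclideanSpace_fin, real_smul]
  push_cast
  field_simp

/-- The natural autocorrelation of the planar spherical wave `exp(2πi r ‖x‖)` exists
and equals `J₀(2πr‖x‖)`, expressed via the power series of `J₀`. -/
theorem autocorrelation_spherical_wave_plane
    (r : ℝ) (hr : 0 < r)
    (g : EuclideanSpace ℝ (Fin 2) → ℂ)
    (hg : ∀ x, g x = Complex.exp (2 * Real.pi * Complex.I * r * ‖x‖)) :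
    ∀ x : EuclideanSpace ℝ (Fin 2),
      Tendsto
        (fun R : ℝ =>
          (∫ y in Metric.closedBall (0 : EuclideanSpace ℝ (Fin 2)) R,
              g y * (starRingEnd ℂ) (g (y - x))) /
            ((Real.pi * R ^ 2 : ℝ) : ℂ))
        atTop
        (𝓝 ((∑' m : ℕ, (-1) ^ m * (Real.pi * r * ‖x‖) ^ (2 * m) /
              ((Nat.factorial m : ℝ) ^ 2) : ℝ) : ℂ)) :=
  autocorrelation_spherical_wave_plane_general r g hg
end

section
/- Let r > 0 be fixed and let g : ℝ → ℂ be g(x) = exp(2πi r |x|). Then for every x ∈ ℝ the limit lim_{R→∞} (1/(2R)) ∫_{−R}^{R} g(y) · conj(g(y − x)) dy exists and equals cos(2π r x). -/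
open MeasureTheory Filter
open scoped Topology

/-- The natural autocorrelation of the one-dimensional wave `exp(2πi r |x|)` exists
and equals `cos(2πrx)`. -/
theorem autocorrelation_spherical_wave_dim_one
    (r : ℝ) (hr : 0 < r)
    (g : ℝ → ℂ)
    (hg : ∀ x, g x = Complex.exp (2 * Real.pi * Complex.I * r * |x|)) :
    ∀ x : ℝ,
      Tendsto
        (fun R : ℝ =>
          (∫ y in (-R)..R, g y * (starRingEnd ℂ) (g (y - x))) / ((2 * R : ℝ) : ℂ))
        atTop
        (𝓝 ((Real.cos (2 * Real.pi * r * x) : ℝ) : ℂ)) := by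
  intro x
  set f : ℝ → ℂ := fun y => g y * (starRingEnd ℂ) (g (y - x)) with hf
  set θ : ℂ := 2 * Real.pi * Complex.I * r * x with hθ
  set c : ℂ := ((Real.cos (2 * Real.pi * r * x) : ℝ) : ℂ) with hc
  have hgc : Continuous g := by
    have : g = fun y : ℝ => Complex.exp (2 * Real.pi * Complex.I * r * ((|y| : ℝ) : ℂ)) := funext hg
    rw [this]
    fun_prop
  have hfc : Continuous f := by
    apply hgc.mul
    exact Complex.continuous_conj.comp (hgc.comp (continuous_id.sub continuous_const))
  have conj_exp : ∀ t : ℝ, (starRingEnd ℂ) (Complex.exp (2 * Real.pi * Complex.I * r * t))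
      = Complex.exp (-(2 * Real.pi * Complex.I * r * t)) := by
    intro t
    rw [← Complex.exp_conj]
    congr 1
    simp only [map_mul, Complex.conj_I, Complex.conj_ofReal, map_ofNat]
    ring
  have keyP : ∀ y : ℝ, |x| ≤ y → f y = Complex.exp θ := by
    intro y hy
    have hx : -y ≤ x ∧ x ≤ y := abs_le.mp hy
    have h1 : |y| = y := abs_of_nonneg (le_trans (abs_nonneg x) hy)
    have h2 : |y - x| = y - x := abs_of_nonneg (by linarith [hx.2])
    rw [hf]
    simp only [hg, h1, h2, conj_exp, ← Complex.exp_add]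
    congr 1
    push_cast
    ring
  have keyN : ∀ y : ℝ, y ≤ -|x| → f y = Complex.exp (-θ) := by
    intro y hy
    have hx := abs_nonneg x
    have hx1 := neg_abs_le x
    have hx2 := le_abs_self x
    have h1 : |y| = -y := abs_of_nonpos (by linarith)
    have h2 : |y - x| = -(y - x) := abs_of_nonpos (by linarith)
    rw [hf]
    simp only [hg, h1, h2, conj_exp, ← Complex.exp_add]
    congr 1
    push_cast
    ring
  set C : ℂ := ∫ y in (-|x|)..(|x|), f y with hC
  have hsum : Complex.exp θ + Complex.exp (-θ) = 2 * c := by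
    have hθ' : θ = ((2 * Real.pi * r * x : ℝ) : ℂ) * Complex.I := by
      rw [hθ]; push_cast; ring
    rw [hθ', ← neg_mul, Complex.exp_mul_I, Complex.exp_mul_I, Complex.cos_neg,
      Complex.sin_neg, ← Complex.ofReal_cos]
    ring
  -- eventual equality
  have hev : ∀ᶠ R in atTop, (∫ y in (-R)..R, f y) / ((2 * R : ℝ) : ℂ)
      = c + (C - 2 * ((|x| : ℝ) : ℂ) * c) * (((2 * R : ℝ) : ℂ))⁻¹ := by
    filter_upwards [eventually_ge_atTop (max |x| 1)] with R hR
    have hRx : |x| ≤ R := le_trans (le_max_left _ _) hR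
    have hR1 : (1 : ℝ) ≤ R := le_trans (le_max_right _ _) hR
    have h2R : ((2 * R : ℝ) : ℂ) ≠ 0 := by
      simp only [ne_eq, Complex.ofReal_eq_zero]
      positivity
    have i1 : IntervalIntegrable f volume (-R) (-|x|) := hfc.intervalIntegrable _ _
    have i2 : IntervalIntegrable f volume (-|x|) (|x|) := hfc.intervalIntegrable _ _
    have i3 : IntervalIntegrable f volume (|x|) R := hfc.intervalIntegrable _ _
    have e1 : (∫ y in (-R)..(-|x|), f y) = (R - |x|) • Complex.exp (-θ) := by
      have heq : Set.EqOn f (fun _ => Complex.exp (-θ)) (Set.uIcc (-R) (-|x|)) := by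
        intro y hy
        rw [Set.uIcc_of_le (by linarith)] at hy
        exact keyN y hy.2
      rw [intervalIntegral.integral_congr heq, intervalIntegral.integral_const]
      congr 1
      ring
    have e3 : (∫ y in (|x|)..R, f y) = (R - |x|) • Complex.exp θ := by
      have heq : Set.EqOn f (fun _ => Complex.exp θ) (Set.uIcc (|x|) R) := by
        intro y hy
        rw [Set.uIcc_of_le (by linarith)] at hy
        exact keyP y hy.1
      rw [intervalIntegral.integral_congr heq, intervalIntegral.integral_const]
    have hsplit : (∫ y in (-R)..R, f y)
        = (∫ y in (-R)..(-|x|), f y) + (∫ y in (-|x|)..(|x|), f y) + (∫ y in (|x|)..R, f y) := by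
      rw [intervalIntegral.integral_add_adjacent_intervals i1 i2,
        intervalIntegral.integral_add_adjacent_intervals (i1.trans i2) i3]
    rw [hsplit, e1, e3, ← hC, Complex.real_smul, Complex.real_smul, div_eq_iff h2R, add_mul,
      mul_assoc, inv_mul_cancel₀ h2R, mul_one]
    push_cast
    linear_combination ((R : ℂ) - ((|x| : ℝ) : ℂ)) * hsum
  -- the limit of the model function
  have hinv : Tendsto (fun R : ℝ => (((2 * R : ℝ) : ℂ))⁻¹) atTop (𝓝 0) := by
    have h1 : Tendsto (fun R : ℝ => (2 * R)⁻¹) atTop (𝓝 0) :=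
      tendsto_inv_atTop_zero.comp (tendsto_id.const_mul_atTop two_pos)
    have h2 := (Complex.continuous_ofReal.tendsto 0).comp h1
    simp only [Function.comp_def, Complex.ofReal_inv, Complex.ofReal_zero] at h2
    exact h2
  have hmodel : Tendsto (fun R : ℝ => c + (C - 2 * ((|x| : ℝ) : ℂ) * c) * (((2 * R : ℝ) : ℂ))⁻¹)
      atTop (𝓝 c) := by
    have := (hinv.const_mul (C - 2 * ((|x| : ℝ) : ℂ) * c)).const_add c
    simpa using this
  exact Tendsto.congr' (Filter.EventuallyEq.symm hev) hmodel
end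

section
/- Let r > 0 and let μ_r denote the uniform (rotation-invariant, normalized surface) probability measure on the sphere {y ∈ ℝ³ : ‖y‖ = r}. Then for every x ∈ ℝ³ with x ≠ 0, ∫ exp(−2πi ⟨x, y⟩) dμ_r(y) = sin(2π r ‖x‖) / (2π r ‖x‖). -/
/-!
By rotation invariance the characteristic function of `μ` is radial, `charFun μ t = f ‖t‖`.
Integrating it over the ball `B_R` and exchanging the integrals gives
`4π ∫₀ᴿ ρ² f ρ dρ = ∫ charFun (volume|B_R) dμ`. The integrand on the right is radial as well, so
it is constant on the sphere of radius `r` carrying `μ`; Archimedes' slicing (the first coordinate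
of a point of `B_R` has density `π (R² - w²)` on `[-R, R]`) evaluates it to
`4π (sin (rR) - rR cos (rR)) / r³`. Differentiating in `R` yields `4π R² f R = 4π R sin (rR) / r`.
-/

open MeasureTheory Metric Set Real
open Complex (I)
open scoped Complex RealInnerProductSpace

local notation "ℝ³" => EuclideanSpace ℝ (Fin 3)

section Invariance

variable {E : Type*} [NormedAddCommGroup E] [InnerProductSpace ℝ E]

theorem exists_linearIsometryEquiv_apply_eq {x y : E} (h : ‖x‖ = ‖y‖) :
    ∃ T : E ≃ₗᵢ[ℝ] E, T x = y :=
  ⟨(ℝ ∙ (x - y))ᗮ.reflection, Submodule.reflection_sub h⟩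

variable [MeasurableSpace E] [BorelSpace E]

theorem charFun_eq_of_norm_eq {μ : Measure E} (hμ : ∀ T : E ≃ₗᵢ[ℝ] E, μ.map T = μ)
    {t t' : E} (h : ‖t‖ = ‖t'‖) : charFun μ t = charFun μ t' := by
  obtain ⟨T, rfl⟩ := exists_linearIsometryEquiv_apply_eq h.symm
  have hT : MeasurePreserving T.toHomeomorph.toMeasurableEquiv μ μ :=
    ⟨T.continuous.measurable, hμ T⟩
  simp only [charFun_apply]
  rw [← hT.integral_comp']
  simp [T.inner_map_map]

theorem map_linearIsometryEquiv_volume_restrict_ball [FiniteDimensional ℝ E]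
    (T : E ≃ₗᵢ[ℝ] E) (R : ℝ) :
    (volume.restrict (ball (0 : E) R)).map T = volume.restrict (ball 0 R) := by
  conv_rhs => rw [← T.measurePreserving.map_eq]
  rw [Measure.restrict_map T.continuous.measurable measurableSet_ball, T.preimage_ball,
    T.symm.map_zero]

theorem integral_charFun_comm [SecondCountableTopology E]
    (μ ν : Measure E) [IsFiniteMeasure μ] [IsFiniteMeasure ν] :
    ∫ t, charFun μ t ∂ν = ∫ x, charFun ν x ∂μ := by
  simp only [charFun_apply]
  rw [integral_integral_swap]
  · refine integral_congr_ae (.of_forall fun y => integral_congr_ae (.of_forall fun x => ?_))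
    simp only [real_inner_comm]
  · refine (integrable_const (1 : ℝ)).mono' (by fun_prop) (.of_forall fun p => ?_)
    exact (Complex.norm_exp_ofReal_mul_I _).le

end Invariance

theorem setIntegral_ball_fun_norm {E F : Type*} [NormedAddCommGroup E] [NormedSpace ℝ E]
    [Nontrivial E] [FiniteDimensional ℝ E] [MeasurableSpace E] [BorelSpace E]
    [NormedAddCommGroup F] [NormedSpace ℝ F] (μ : Measure E) [μ.IsAddHaarMeasure] (f : ℝ → F)
    {R : ℝ} (hR : 0 ≤ R) :
    ∫ x in ball (0 : E) R, f ‖x‖ ∂μ = Module.finrank ℝ E • μ.real (ball 0 1) •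
      ∫ ρ in 0..R, ρ ^ (Module.finrank ℝ E - 1) • f ρ := by
  have hball (x : E) : (ball 0 R).indicator (fun x => f ‖x‖) x = (Iio R).indicator f ‖x‖ := by
    simp [indicator]
  simp_rw [← integral_indicator measurableSet_ball, hball]
  rw [integral_fun_norm_addHaar μ ((Iio R).indicator f), intervalIntegral.integral_of_le hR,
    integral_Ioc_eq_integral_Ioo, ← Ioi_inter_Iio, ← setIntegral_indicator measurableSet_Iio]
  simp_rw [indicator_smul_apply]

theorem integral_sq_sub_sq_smul_exp_mul_I {a : ℝ} (ha : a ≠ 0) (R : ℝ) :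
    ∫ w in -R..R, (R ^ 2 - w ^ 2) • cexp (↑(a * w) * I) =
      ((4 * (sin (a * R) - a * R * cos (a * R)) / a ^ 3 : ℝ) : ℂ) := by
  have ha' : (a : ℂ) ≠ 0 := Complex.ofReal_ne_zero.2 ha
  -- `F = exp (i a z) * P z`, where the quadratic `P` solves `i a P + P' = R² - z²`.
  set F : ℂ → ℂ := fun z =>
    cexp (a * z * I) * (-(R ^ 2 - z ^ 2) * I / a - 2 * z / a ^ 2 - 2 * I / a ^ 3)
  have hF (w : ℝ) : HasDerivAt (fun w : ℝ => F w) ((R ^ 2 - w ^ 2) • cexp (↑(a * w) * I)) w := by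
    refine HasDerivAt.comp_ofReal (e := F) ?_
    have hexp : HasDerivAt (fun z : ℂ => cexp (a * z * I)) (cexp (a * w * I) * (a * I)) w := by
      simpa using (((hasDerivAt_id (w : ℂ)).const_mul (a : ℂ)).mul_const I).cexp
    have hP : HasDerivAt (fun z : ℂ => -(R ^ 2 - z ^ 2) * I / a - 2 * z / a ^ 2 - 2 * I / a ^ 3)
        (2 * w * I / a - 2 / a ^ 2) w := by
      refine (((((hasDerivAt_pow 2 _).const_sub _).neg.mul_const I).div_const _).sub
        (((hasDerivAt_id _).const_mul 2).div_const _) |>.sub_const _).congr_deriv ?_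
      ring
    refine (hexp.mul hP).congr_deriv ?_
    rw [Complex.real_smul]
    push_cast
    field_simp
    linear_combination (-(2 + (a : ℂ) ^ 2 * R ^ 2 - (a : ℂ) ^ 2 * w ^ 2)) * Complex.I_sq
  rw [intervalIntegral.integral_eq_sub_of_hasDerivAt (fun w _ => hF w)
    (Continuous.intervalIntegrable (by fun_prop) _ _)]
  simp only [F]
  push_cast
  rw [Complex.sin, Complex.cos]
  field_simp
  ring

theorem hasDerivAt_sin_sub_mul_cos (x : ℝ) :
    HasDerivAt (fun x => sin x - x * cos x) (x * sin x) x := by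
  refine ((hasDerivAt_sin x).sub ((hasDerivAt_id x).mul (hasDerivAt_cos x))).congr_deriv ?_
  simp only [id]
  ring

theorem volume_sum_sq_lt_fin_two (a : ℝ) :
    volume {v : Fin 2 → ℝ | ∑ j, v j ^ 2 < a} = ENNReal.ofReal (π * a) := by
  rcases le_or_gt a 0 with ha | ha
  · rw [ENNReal.ofReal_of_nonpos (mul_nonpos_of_nonneg_of_nonpos pi_pos.le ha)]
    convert measure_empty (μ := (volume : Measure (Fin 2 → ℝ)))
    ext v
    simp only [mem_ofPred_eq, mem_empty_iff_false, iff_false, not_lt]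
    exact ha.trans (by positivity)
  · have h := EuclideanSpace.ball_zero_eq (n := Fin 2) (√a) (sqrt_nonneg a)
    rw [sq_sqrt ha.le] at h
    have : {v : Fin 2 → ℝ | ∑ j, v j ^ 2 < a} = WithLp.toLp 2 ⁻¹' ball 0 √a := by rw [h]; rfl
    rw [this, (PiLp.volume_preserving_toLp (Fin 2)).measure_preimage
        measurableSet_ball.nullMeasurableSet,
      EuclideanSpace.volume_ball_fin_two, ← ENNReal.ofReal_pow (sqrt_nonneg a), sq_sqrt ha.le,
      ← ENNReal.ofReal_mul ha.le, mul_comm]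

namespace EuclideanSpace

def splitFirst (n : ℕ) : EuclideanSpace ℝ (Fin (n + 1)) ≃ᵐ ℝ × (Fin n → ℝ) :=
  (MeasurableEquiv.toLp 2 (Fin (n + 1) → ℝ)).symm.trans
    (MeasurableEquiv.piFinSuccAbove (fun _ => ℝ) 0)

theorem measurePreserving_splitFirst (n : ℕ) :
    MeasurePreserving (splitFirst n) volume volume :=
  (volume_preserving_symm_measurableEquiv_toLp (Fin (n + 1))).trans
    (volume_preserving_piFinSuccAbove (fun _ => ℝ) 0)

theorem sum_sq_eq_splitFirst {n : ℕ} (u : EuclideanSpace ℝ (Fin (n + 1))) :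
    ∑ i, u i ^ 2 = (splitFirst n u).1 ^ 2 + ∑ j, (splitFirst n u).2 j ^ 2 := by
  simp [splitFirst, Fin.sum_univ_succ, Fin.tail]

theorem volume_real_ball_fin_three : volume.real (ball (0 : ℝ³) 1) = 4 * π / 3 := by
  rw [measureReal_def, volume_ball_fin_three, ENNReal.ofReal_one, one_pow, one_mul,
    ENNReal.toReal_ofReal (by positivity)]
  ring

end EuclideanSpace

-- `ENNReal.ofReal` truncates the density to `0` outside `[-R, R]`.
open EuclideanSpace in
theorem map_apply_zero_volume_restrict_ball {R : ℝ} (hR : 0 ≤ R) :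
    (volume.restrict (ball (0 : ℝ³) R)).map (fun u => u 0) =
      volume.withDensity (fun w => ENNReal.ofReal (π * (R ^ 2 - w ^ 2))) := by
  ext s hs
  set A := {p : ℝ × (Fin 2 → ℝ) | p.1 ∈ s ∧ ∑ j, p.2 j ^ 2 < R ^ 2 - p.1 ^ 2}
  have hA : MeasurableSet A := (measurable_fst hs).inter <|
    measurableSet_lt (f := fun p : ℝ × (Fin 2 → ℝ) => ∑ j, p.2 j ^ 2) (by fun_prop) (by fun_prop)
  have hpre : (fun u : ℝ³ => u 0) ⁻¹' s ∩ ball 0 R = splitFirst 2 ⁻¹' A := by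
    ext u
    simp only [ball_zero_eq R hR, sum_sq_eq_splitFirst, A, mem_inter_iff, mem_preimage,
      mem_ofPred_eq, lt_sub_iff_add_lt']
    rfl
  have hslice (w : ℝ) :
      volume (Prod.mk w ⁻¹' A) = s.indicator (fun w => ENNReal.ofReal (π * (R ^ 2 - w ^ 2))) w := by
    by_cases hw : w ∈ s
    · rw [indicator_of_mem hw, ← volume_sum_sq_lt_fin_two]
      congr 1
      ext v
      simp [A, hw]
    · simp [A, hw]
  rw [Measure.map_apply (by fun_prop) hs,
    Measure.restrict_apply ((by fun_prop : Measurable fun u : ℝ³ => u 0) hs), hpre,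
    (measurePreserving_splitFirst 2).measure_preimage hA.nullMeasurableSet, Measure.volume_eq_prod,
    Measure.prod_apply hA, withDensity_apply _ hs, ← lintegral_indicator hs]
  simp_rw [hslice]

theorem setIntegral_ball_comp_apply_zero {F : Type*} [NormedAddCommGroup F] [NormedSpace ℝ F]
    {g : ℝ → F} (hg : AEStronglyMeasurable g) {R : ℝ} (hR : 0 ≤ R) :
    ∫ u in ball (0 : ℝ³) R, g (u 0) = ∫ w in -R..R, (π * (R ^ 2 - w ^ 2)) • g w := by
  have hmap := map_apply_zero_volume_restrict_ball hR
  rw [← integral_map (by fun_prop) (hmap ▸ hg.mono_ac (withDensity_absolutelyContinuous _ _)),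
    hmap, integral_withDensity_eq_integral_toReal_smul (by fun_prop)
      (.of_forall fun _ => ENNReal.ofReal_lt_top),
    intervalIntegral.integral_of_le (by linarith), ← integral_indicator measurableSet_Ioc]
  congr 1
  ext w
  by_cases hw : w ∈ Ioc (-R) R
  · rw [indicator_of_mem hw, ENNReal.toReal_ofReal]
    nlinarith [pi_pos, sq_le_sq' hw.1.le hw.2]
  · rw [indicator_of_notMem hw, ENNReal.ofReal_of_nonpos, ENNReal.toReal_zero, zero_smul]
    simp only [mem_Ioc, not_and_or, not_lt, not_le] at hw
    have : R ^ 2 ≤ w ^ 2 := by rcases hw with h | h <;> nlinarith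
    nlinarith [pi_pos]

theorem charFun_volume_restrict_ball {t : ℝ³} (ht : t ≠ 0) {R : ℝ} (hR : 0 ≤ R) :
    charFun (volume.restrict (ball (0 : ℝ³) R)) t =
      ((4 * π * (sin (‖t‖ * R) - ‖t‖ * R * cos (‖t‖ * R)) / ‖t‖ ^ 3 : ℝ) : ℂ) := by
  rw [charFun_eq_of_norm_eq (map_linearIsometryEquiv_volume_restrict_ball · R)
    (t' := ‖t‖ • EuclideanSpace.single 0 1) (by simp [norm_smul]), charFun_apply]
  simp only [inner_smul_right, EuclideanSpace.inner_single_right, one_mul, conj_trivial]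
  rw [setIntegral_ball_comp_apply_zero (g := fun w => cexp (↑(‖t‖ * w) * I)) (by fun_prop) hR]
  simp_rw [mul_smul]
  rw [intervalIntegral.integral_smul, integral_sq_sub_sq_smul_exp_mul_I (norm_ne_zero_iff.2 ht),
    Complex.real_smul]
  push_cast
  ring

theorem setIntegral_ball_charFun_of_sphere {r : ℝ} (hr : 0 < r) (μ : Measure ℝ³)
    [IsProbabilityMeasure μ] (hsupp : μ (sphere 0 r)ᶜ = 0) {R : ℝ} (hR : 0 ≤ R) :
    ∫ u in ball (0 : ℝ³) R, charFun μ u =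
      ((4 * π * (sin (r * R) - r * R * cos (r * R)) / r ^ 3 : ℝ) : ℂ) := by
  have : IsFiniteMeasure (volume.restrict (ball (0 : ℝ³) R)) :=
    isFiniteMeasure_restrict.2 measure_ball_lt_top.ne
  have hsphere : ∀ᵐ y ∂μ, ‖y‖ = r :=
    measure_eq_zero_iff_ae_notMem.1 hsupp |>.mono fun y hy => by simpa using hy
  rw [integral_charFun_comm, integral_congr_ae (hsphere.mono fun y hy => ?_), integral_const,
    probReal_univ, one_smul]
  rw [charFun_volume_restrict_ball (norm_ne_zero_iff.1 (hy ▸ hr.ne')) hR, hy]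

theorem charFun_eq_sin_div_of_sphere {r : ℝ} (hr : 0 < r) (μ : Measure ℝ³)
    [IsProbabilityMeasure μ] (hsupp : μ (sphere 0 r)ᶜ = 0)
    (hrot : ∀ T : ℝ³ ≃ₗᵢ[ℝ] ℝ³, μ.map T = μ) {t : ℝ³} (ht : t ≠ 0) :
    charFun μ t = ((sin (r * ‖t‖) / (r * ‖t‖) : ℝ) : ℂ) := by
  set f : ℝ → ℂ := fun ρ => charFun μ (ρ • EuclideanSpace.single 0 1)
  have hradial (u : ℝ³) : charFun μ u = f ‖u‖ := charFun_eq_of_norm_eq hrot (by simp [norm_smul])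
  have hball (R : ℝ) (hR : 0 < R) : ((4 * π : ℝ) : ℂ) * ∫ ρ in 0..R, ρ ^ 2 • f ρ =
      ((4 * π * (sin (r * R) - r * R * cos (r * R)) / r ^ 3 : ℝ) : ℂ) := by
    rw [← setIntegral_ball_charFun_of_sphere hr μ hsupp hR.le, funext hradial,
      setIntegral_ball_fun_norm volume f hR.le, finrank_euclideanSpace_fin,
      EuclideanSpace.volume_real_ball_fin_three, ← Nat.cast_smul_eq_nsmul ℝ, smul_smul,
      Complex.real_smul]
    congr 2
    ring
  set s := ‖t‖
  have hs : 0 < s := norm_pos_iff.2 ht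
  have hg : Continuous fun ρ : ℝ => ρ ^ 2 • f ρ := by
    have : Continuous f := continuous_charFun.comp (by fun_prop)
    fun_prop
  have hd₁ : HasDerivAt (fun R => ((4 * π : ℝ) : ℂ) * ∫ ρ in 0..R, ρ ^ 2 • f ρ)
      (((4 * π : ℝ) : ℂ) * (s ^ 2 • f s)) s :=
    (intervalIntegral.integral_hasDerivAt_right (hg.intervalIntegrable _ _)
      (hg.stronglyMeasurableAtFilter _ _) hg.continuousAt).const_mul _
  have hd₂ : HasDerivAt (fun R => ((4 * π * (sin (r * R) - r * R * cos (r * R)) / r ^ 3 : ℝ) : ℂ))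
      ((4 * π * (r * s * sin (r * s) * r) / r ^ 3 : ℝ) : ℂ) s :=
    HasDerivAt.ofReal_comp <| (((hasDerivAt_sin_sub_mul_cos (r * s)).comp s
      ((hasDerivAt_id s).const_mul r)).const_mul (4 * π)).div_const (r ^ 3) |>.congr_deriv
        (by simp)
  have hderiv := hd₁.unique <| hd₂.congr_of_eventuallyEq <|
    Filter.eventually_of_mem (Ioi_mem_nhds hs) hball
  have hπ : (π : ℂ) ≠ 0 := Complex.ofReal_ne_zero.2 pi_ne_zero
  have hr' : (r : ℂ) ≠ 0 := Complex.ofReal_ne_zero.2 hr.ne'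
  have hs' : (s : ℂ) ≠ 0 := Complex.ofReal_ne_zero.2 hs.ne'
  rw [hradial t]
  rw [Complex.real_smul] at hderiv
  push_cast at hderiv ⊢
  field_simp at hderiv ⊢
  linear_combination hderiv

/-- The Fourier transform of the uniform (rotation-invariant) probability measure on the
sphere of radius `r` in `ℝ³` equals `sin(2πr‖x‖)/(2πr‖x‖)` for every `x ≠ 0`. -/
theorem fourierTransform_uniform_sphere_measure_dim_three
    (r : ℝ) (hr : 0 < r)
    (μ : Measure (EuclideanSpace ℝ (Fin 3))) [IsProbabilityMeasure μ]
    (hsupp : μ (Metric.sphere (0 : EuclideanSpace ℝ (Fin 3)) r)ᶜ = 0)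
    (hrot : ∀ T : EuclideanSpace ℝ (Fin 3) ≃ₗᵢ[ℝ] EuclideanSpace ℝ (Fin 3),
      Measure.map T μ = μ) :
    ∀ x : EuclideanSpace ℝ (Fin 3), x ≠ 0 →
      ∫ y, Complex.exp (-(2 * Real.pi * Complex.I * ((inner ℝ x y : ℝ)))) ∂μ =
        ((Real.sin (2 * Real.pi * r * ‖x‖) / (2 * Real.pi * r * ‖x‖) : ℝ) : ℂ) := by
  intro x hx
  have hnorm : ‖(-(2 * π)) • x‖ = 2 * π * ‖x‖ := by
    rw [norm_smul, norm_neg, norm_of_nonneg (by positivity)]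
  calc ∫ y, Complex.exp (-(2 * Real.pi * Complex.I * ((inner ℝ x y : ℝ)))) ∂μ
      = charFun μ ((-(2 * π)) • x) := by
        rw [charFun_apply]
        congr 1 with y
        rw [inner_smul_right, real_inner_comm]
        push_cast
        congr 1
        ring
    _ = _ := by
        rw [charFun_eq_sin_div_of_sphere hr μ hsupp hrot
          (smul_ne_zero (neg_ne_zero.2 (by positivity)) hx), hnorm,
          show r * (2 * π * ‖x‖) = 2 * π * r * ‖x‖ by ring]
end

section
/- For every r > 0 there exists a bounded continuous function g : ℝ² → ℂ such that (i) for every x ∈ ℝ² the autocorrelation limit η(x) = lim_{R→∞} (1/(πR²)) ∫_{B_R} g(y) · conj(g(y − x)) dy exists, and (ii) for every Schwartz function φ : ℝ² → ℂ, ∫_{ℝ²} η(x) · (𝓕φ)(x) dx = ∫ φ dμ_r, where μ_r is the uniform probability measure on the circle of radius r; i.e., the diffraction of g is uniformly distributed and concentrated on a single circle. -/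
open MeasureTheory Filter
open scoped Topology FourierTransform

open Metric Set
open scoped RealInnerProductSpace Real ComplexConjugate

/-!
The witness is the spherical wave `g y = 𝐞 (r ‖y‖)`. Since
`‖y‖ - ‖y - x‖ = ⟪x, y / ‖y‖⟫ + O(‖x‖² / ‖y‖)`, the integrand `g y * conj (g (y - x))` differs
by `O(1 / ‖y‖)` from `y ↦ 𝐞 ⟪x, (r / ‖y‖) • y⟫`. The latter is constant on rays, so in polar
coordinates its average over every disc centred at `0` is the average of `𝐞 ⟪x, ·⟫` over the
circle of radius `r`, while `1 / ‖y‖` has average `O(1 / R)` over the disc of radius `R`.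
A rotation-invariant probability measure on that circle integrates every continuous function to
its circle average, so the limit `η x` is `∫ 𝐞 ⟪x, z⟫ dμ(z)`, and Fubini together with Fourier
inversion for Schwartz functions gives `∫ η · 𝓕 φ = ∫ φ dμ`.
-/

noncomputable section

namespace Diffraction

theorem abs_norm_sub_norm_sub_sub_inner_div_le {V : Type*} [NormedAddCommGroup V]
    [InnerProductSpace ℝ V] (x : V) {y : V} (hy : y ≠ 0) :
    |‖y‖ - ‖y - x‖ - ⟪x, y⟫ / ‖y‖| ≤ 2 * ‖x‖ ^ 2 / ‖y‖ := by
  have hs : 0 < ‖y‖ := norm_pos_iff.mpr hy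
  set t := ⟪x, y⟫ / ‖y‖
  have ht : |t| ≤ ‖x‖ := by
    rw [abs_div, abs_norm, div_le_iff₀ hs]
    exact abs_real_inner_le_norm x y
  have hA : |‖y‖ - ‖y - x‖| ≤ ‖x‖ := by
    simpa using abs_norm_sub_norm_le y (y - x)
  have hfactor : (‖y‖ - ‖y - x‖ - t) * (‖y‖ + ‖y - x‖) = t * (‖y‖ - ‖y - x‖) - ‖x‖ ^ 2 := by
    have hsq := norm_sub_sq_real y x
    rw [real_inner_comm] at hsq
    have : ⟪x, y⟫ = t * ‖y‖ := (div_mul_cancel₀ _ hs.ne').symm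
    rw [this] at hsq
    linear_combination -hsq
  rw [le_div_iff₀ hs]
  calc |‖y‖ - ‖y - x‖ - t| * ‖y‖ ≤ |‖y‖ - ‖y - x‖ - t| * (‖y‖ + ‖y - x‖) := by
        gcongr; linarith [norm_nonneg (y - x)]
    _ = |t * (‖y‖ - ‖y - x‖) - ‖x‖ ^ 2| := by
        rw [← hfactor, abs_mul, abs_of_nonneg (by positivity : 0 ≤ ‖y‖ + ‖y - x‖)]
    _ ≤ |t| * |‖y‖ - ‖y - x‖| + ‖x‖ ^ 2 := by
        refine (abs_sub _ _).trans ?_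
        rw [abs_mul, abs_of_nonneg (sq_nonneg ‖x‖)]
    _ ≤ 2 * ‖x‖ ^ 2 := by nlinarith [abs_nonneg t, abs_nonneg (‖y‖ - ‖y - x‖)]

theorem norm_fourierChar_sub_fourierChar_le (a b : ℝ) :
    ‖(𝐞 a : ℂ) - 𝐞 b‖ ≤ 2 * π * |a - b| := by
  have h : (𝐞 a : ℂ) - 𝐞 b = 𝐞 b * (Complex.exp (Complex.I * (2 * π * (a - b) : ℝ)) - 1) := by
    rw [mul_sub, mul_one, mul_comm Complex.I, ← Real.fourierChar_apply, ← Circle.coe_mul,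
      ← AddChar.map_add_eq_mul, add_sub_cancel]
  rw [h, norm_mul, Circle.norm_coe, one_mul]
  refine Real.norm_exp_I_mul_ofReal_sub_one_le.trans_eq ?_
  rw [Real.norm_eq_abs, abs_mul, abs_of_pos Real.two_pi_pos]

section SphericalWave

variable {V : Type*} [NormedAddCommGroup V]

def sphericalWave (r : ℝ) (y : V) : ℂ := 𝐞 (r * ‖y‖)

@[fun_prop]
theorem continuous_sphericalWave (r : ℝ) : Continuous (sphericalWave (V := V) r) := by
  unfold sphericalWave; fun_prop

theorem norm_sphericalWave (r : ℝ) (y : V) : ‖sphericalWave r y‖ = 1 := Circle.norm_coe _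

theorem sphericalWave_mul_conj (r : ℝ) (x y : V) :
    sphericalWave r y * conj (sphericalWave r (y - x)) = 𝐞 (r * (‖y‖ - ‖y - x‖)) := by
  rw [sphericalWave, sphericalWave, Circle.starRingEnd_addChar, ← Circle.coe_mul,
    ← AddChar.map_add_eq_mul, mul_sub, ← sub_eq_add_neg]

variable [InnerProductSpace ℝ V]

theorem norm_sphericalWave_mul_conj_sub_le (r : ℝ) (x : V) {y : V} (hy : y ≠ 0) :
    ‖sphericalWave r y * conj (sphericalWave r (y - x)) - 𝐞 ⟪x, (r / ‖y‖) • y⟫‖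
      ≤ 4 * π * |r| * ‖x‖ ^ 2 / ‖y‖ := by
  rw [sphericalWave_mul_conj, real_inner_smul_right]
  calc _ ≤ 2 * π * |r * (‖y‖ - ‖y - x‖) - r / ‖y‖ * ⟪x, y⟫| :=
        norm_fourierChar_sub_fourierChar_le _ _
    _ = 2 * π * |r| * |‖y‖ - ‖y - x‖ - ⟪x, y⟫ / ‖y‖| := by
        rw [mul_assoc _ |r|, ← abs_mul]; ring_nf
    _ ≤ 2 * π * |r| * (2 * ‖x‖ ^ 2 / ‖y‖) := by
        gcongr; exact abs_norm_sub_norm_sub_sub_inner_div_le x hy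
    _ = 4 * π * |r| * ‖x‖ ^ 2 / ‖y‖ := by ring

end SphericalWave

-- `π R ^ 2` is the area of a disc, so this is a ball average only in the plane.
def ballAutocorrelation {V : Type*} [NormedAddCommGroup V] [MeasureSpace V] (g : V → ℂ) (x : V)
    (R : ℝ) : ℂ :=
  (∫ y in closedBall (0 : V) R, g y * conj (g (y - x))) / ((π * R ^ 2 : ℝ) : ℂ)

theorem ballAutocorrelation_comp_linearIsometryEquiv {V W : Type*}
    [NormedAddCommGroup V] [InnerProductSpace ℝ V] [FiniteDimensional ℝ V]
    [MeasurableSpace V] [BorelSpace V]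
    [NormedAddCommGroup W] [InnerProductSpace ℝ W] [FiniteDimensional ℝ W]
    [MeasurableSpace W] [BorelSpace W]
    (e : V ≃ₗᵢ[ℝ] W) (g : W → ℂ) (x : W) (R : ℝ) :
    ballAutocorrelation (g ∘ e) (e.symm x) R = ballAutocorrelation g x R := by
  have hball : e ⁻¹' closedBall 0 R = closedBall 0 R := by
    rw [← e.coe_toIsometryEquiv, IsometryEquiv.preimage_closedBall]; simp
  unfold ballAutocorrelation
  rw [← e.measurePreserving.setIntegral_preimage_emb e.toHomeomorph.measurableEmbedding, hball]
  simp

theorem integrableOn_closedBall_inv_norm {E : Type*} [NormedAddCommGroup E] [NormedSpace ℝ E]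
    [FiniteDimensional ℝ E] [MeasurableSpace E] [BorelSpace E] (μ : Measure E)
    [μ.IsAddHaarMeasure] (hE : 1 < Module.finrank ℝ E) (R : ℝ) :
    IntegrableOn (fun z : E => ‖z‖⁻¹) (closedBall 0 R) μ := by
  have hloc : LocallyIntegrable (fun z : E => ‖z‖⁻¹) μ :=
    locallyIntegrable_of_norm_le_rpow (C := 1) (α := 1) hE.le (by exact_mod_cast hE)
      (ae_of_all _ fun z => by simp [Real.rpow_neg_one]) (by fun_prop)
  exact hloc.integrableOn_isCompact (isCompact_closedBall 0 R)

section Circle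

variable {E : Type*} [NormedAddCommGroup E] [NormedSpace ℝ E]

theorem setIntegral_closedBall_eq_polarCoord (f : ℂ → E) (R : ℝ) :
    ∫ z in closedBall (0 : ℂ) R, f z
      = ∫ p in Ioc 0 R ×ˢ Ioo (-π) π, p.1 • f (Complex.polarCoord.symm p) := by
  have htarget : Complex.polarCoord.target ∩ Ioc 0 R ×ˢ univ = Ioc 0 R ×ˢ Ioo (-π) π := by
    ext p
    simp only [Complex.polarCoord_target, mem_inter_iff, mem_prod, mem_Ioi, mem_Ioc, mem_univ]
    tauto
  rw [← integral_indicator measurableSet_closedBall, ← Complex.integral_comp_polarCoord_symm,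
    ← htarget, ← setIntegral_indicator (measurableSet_Ioc.prod MeasurableSet.univ)]
  refine setIntegral_congr_fun polarCoord.open_target.measurableSet fun p hp => ?_
  have hp1 : 0 < p.1 := hp.1
  have hball : Complex.polarCoord.symm p ∈ closedBall 0 R ↔ p ∈ Ioc 0 R ×ˢ univ := by
    simp [abs_of_pos hp1, hp1]
  by_cases h : p ∈ Ioc 0 R ×ˢ univ
  · rw [indicator_of_mem (hball.mpr h), indicator_of_mem h]
  · rw [indicator_of_notMem (mt hball.mp h), indicator_of_notMem h, smul_zero]

theorem setIntegral_closedBall_comp_div_norm_smul (f : ℂ → E) (r : ℝ) {R : ℝ} (hR : 0 ≤ R) :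
    ∫ z in closedBall (0 : ℂ) R, f ((r / ‖z‖) • z) = (π * R ^ 2) • Real.circleAverage f 0 r := by
  have hcircle : ∀ p ∈ Ioc 0 R ×ˢ Ioo (-π) π,
      p.1 • f ((r / ‖Complex.polarCoord.symm p‖) • Complex.polarCoord.symm p)
        = p.1 • f (circleMap 0 r p.2) := by
    rintro p ⟨⟨hp, -⟩, -⟩
    congr 2
    rw [Complex.norm_polarCoord_symm, abs_of_pos hp, Complex.polarCoord_symm_apply, circleMap,
      Complex.exp_mul_I, Complex.real_smul]
    have : (p.1 : ℂ) ≠ 0 := by exact_mod_cast hp.ne'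
    push_cast
    field_simp
    ring
  have hperiod : Function.Periodic (fun θ => f (circleMap 0 r θ)) (2 * π) := fun θ => by
    simp [periodic_circleMap 0 r θ]
  have hangle : ∫ θ in Ioo (-π) π, f (circleMap 0 r θ) = (2 * π) • Real.circleAverage f 0 r := by
    rw [Real.circleAverage_def, smul_inv_smul₀ Real.two_pi_pos.ne',
      integral_Ioc_eq_integral_Ioo.symm,
      ← intervalIntegral.integral_of_le (by linarith [Real.pi_pos])]
    simpa [show -π + 2 * π = π by ring] using hperiod.intervalIntegral_add_eq (-π) 0
  have hradius : ∫ ρ in Ioc 0 R, ρ = R ^ 2 / 2 := by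
    rw [← intervalIntegral.integral_of_le hR, integral_id]; ring
  rw [setIntegral_closedBall_eq_polarCoord, setIntegral_congr_fun
    (measurableSet_Ioc.prod measurableSet_Ioo) hcircle, Measure.volume_eq_prod,
    ← Measure.prod_restrict, integral_prod_smul (fun ρ : ℝ => ρ) (fun θ => f (circleMap 0 r θ)),
    hradius, hangle, smul_smul]
  ring_nf

theorem circleAverage_zero_eq_integral_exp_mul (f : ℂ → E) {z : ℂ} {r : ℝ} (hz : ‖z‖ = r) :
    Real.circleAverage f 0 r = (2 * π)⁻¹ • ∫ θ in 0..2 * π, f (Circle.exp θ * z) := by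
  rw [Real.circleAverage_eq_integral_add (η := z.arg)]
  congr 1
  refine intervalIntegral.integral_congr fun θ _ => ?_
  congr 1
  conv_rhs => rw [← Complex.norm_mul_exp_arg_mul_I z]
  rw [circleMap, zero_add, Circle.coe_exp, Complex.ofReal_add, add_mul, Complex.exp_add, hz]
  ring

theorem integral_eq_circleAverage_of_map_rotation [CompleteSpace E] {ν : Measure ℂ}
    [IsProbabilityMeasure ν] {r : ℝ}
    (hsupp : ν (sphere 0 r)ᶜ = 0) (hrot : ∀ a : Circle, ν.map (rotation a) = ν) {f : ℂ → E}
    (hf : Continuous f) :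
    ∫ z, f z ∂ν = Real.circleAverage f 0 r := by
  have hsphere : ∀ᵐ z ∂ν, ‖z‖ = r := by
    filter_upwards [mem_ae_iff.mpr hsupp] with z hz
    simpa using hz
  have hrotate : ∀ θ : ℝ, ∫ z, f (Circle.exp θ * z) ∂ν = ∫ z, f z ∂ν := fun θ => by
    conv_rhs => rw [← hrot (Circle.exp θ)]
    rw [integral_map (rotation _).continuous.aemeasurable hf.aestronglyMeasurable]
    rfl
  obtain ⟨C, hC⟩ := (isCompact_sphere (0 : ℂ) r).exists_bound_of_continuousOn hf.continuousOn
  have hint : Integrable (Function.uncurry fun θ z => f (Circle.exp θ * z))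
      ((volume.restrict (Ioc 0 (2 * π))).prod ν) := by
    refine Integrable.mono' (integrable_const C) (by fun_prop) ?_
    filter_upwards [Measure.quasiMeasurePreserving_snd.ae hsphere] with p hp
    exact hC _ (by simpa using hp)
  calc ∫ z, f z ∂ν = (2 * π)⁻¹ • ∫ θ in 0..2 * π, (∫ z, f (Circle.exp θ * z) ∂ν) := by
        simp only [hrotate, intervalIntegral.integral_const, sub_zero, smul_smul,
          inv_mul_cancel₀ Real.two_pi_pos.ne', one_smul]
    _ = (2 * π)⁻¹ • ∫ z, (∫ θ in 0..2 * π, f (Circle.exp θ * z)) ∂ν := by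
        simp only [intervalIntegral.integral_of_le Real.two_pi_pos.le]
        rw [integral_integral_swap hint]
    _ = ∫ z, Real.circleAverage f 0 r ∂ν := by
        rw [← integral_smul]
        refine integral_congr_ae ?_
        filter_upwards [hsphere] with z hz
        exact (circleAverage_zero_eq_integral_exp_mul f hz).symm
    _ = Real.circleAverage f 0 r := by simp

end Circle

theorem setIntegral_closedBall_inv_norm {R : ℝ} (hR : 0 ≤ R) :
    ∫ z in closedBall (0 : ℂ) R, ‖z‖⁻¹ = 2 * π * R := by
  have hone : ∀ p ∈ Ioc 0 R ×ˢ Ioo (-π) π, p.1 • ‖Complex.polarCoord.symm p‖⁻¹ = (1 : ℝ) := by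
    rintro p ⟨⟨hp, -⟩, -⟩
    rw [Complex.norm_polarCoord_symm, abs_of_pos hp, smul_eq_mul, mul_inv_cancel₀ hp.ne']
  rw [setIntegral_closedBall_eq_polarCoord, setIntegral_congr_fun
    (measurableSet_Ioc.prod measurableSet_Ioo) hone, setIntegral_const, smul_eq_mul, mul_one,
    Measure.volume_eq_prod, measureReal_prod_prod, Real.volume_real_Ioc_of_le hR,
    Real.volume_real_Ioo_of_le (by linarith [Real.pi_pos])]
  ring

theorem norm_ballAutocorrelation_sphericalWave_sub_le (r : ℝ) (x : ℂ) {R : ℝ} (hR : 0 < R) :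
    ‖ballAutocorrelation (sphericalWave r) x R
        - Real.circleAverage (fun z => (𝐞 ⟪x, z⟫ : ℂ)) 0 r‖
      ≤ 8 * π * |r| * ‖x‖ ^ 2 / R := by
  set C := 4 * π * |r| * ‖x‖ ^ 2
  set G := fun y : ℂ => sphericalWave r y * conj (sphericalWave r (y - x))
  set h := fun y : ℂ => (𝐞 ⟪x, (r / ‖y‖) • y⟫ : ℂ)
  have hG : IntegrableOn G (closedBall 0 R) :=
    (by unfold G; fun_prop : Continuous G).continuousOn.integrableOn_compact
      (isCompact_closedBall 0 R)
  have hh : IntegrableOn h (closedBall 0 R) :=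
    Measure.integrableOn_of_bounded (M := 1) measure_closedBall_lt_top.ne
      (by unfold h; fun_prop) (ae_of_all _ fun y => (Circle.norm_coe _).le)
  have hdiff : ‖∫ y in closedBall 0 R, G y - h y‖ ≤ C * (2 * π * R) := by
    rw [← setIntegral_closedBall_inv_norm hR.le, ← integral_const_mul]
    refine norm_integral_le_of_norm_le
      ((integrableOn_closedBall_inv_norm volume (by simp) R).const_mul C) ?_
    filter_upwards [ae_restrict_of_ae ((countable_singleton (0 : ℂ)).ae_notMem volume)] with y hy
    exact norm_sphericalWave_mul_conj_sub_le r x hy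
  have harea : (0 : ℝ) < π * R ^ 2 := by positivity
  rw [ballAutocorrelation, ← inv_smul_smul₀ harea.ne' (Real.circleAverage _ 0 r),
    ← setIntegral_closedBall_comp_div_norm_smul _ _ hR.le]
  calc _ = ‖(π * R ^ 2)⁻¹ • ∫ y in closedBall 0 R, G y - h y‖ := by
        rw [integral_sub hG hh, smul_sub, div_eq_inv_mul, Complex.real_smul, Complex.real_smul]
        push_cast; rfl
    _ = (π * R ^ 2)⁻¹ * ‖∫ y in closedBall 0 R, G y - h y‖ := by
        rw [norm_smul, Real.norm_of_nonneg (inv_nonneg.mpr harea.le)]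
    _ ≤ (π * R ^ 2)⁻¹ * (C * (2 * π * R)) := by gcongr
    _ = 8 * π * |r| * ‖x‖ ^ 2 / R := by
        simp only [C]; field_simp; ring

theorem tendsto_ballAutocorrelation_sphericalWave (r : ℝ) (x : ℂ) :
    Tendsto (ballAutocorrelation (sphericalWave r) x) atTop
      (𝓝 (Real.circleAverage (fun z => (𝐞 ⟪x, z⟫ : ℂ)) 0 r)) := by
  rw [tendsto_iff_norm_sub_tendsto_zero]
  refine squeeze_zero' (Eventually.of_forall fun R => norm_nonneg _) ?_
    ((tendsto_const_nhds (x := 8 * π * |r| * ‖x‖ ^ 2)).div_atTop tendsto_id)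
  filter_upwards [eventually_gt_atTop 0] with R hR
  exact norm_ballAutocorrelation_sphericalWave_sub_le r x hR

def fourierInvMeasure {V : Type*} [NormedAddCommGroup V] [InnerProductSpace ℝ V]
    [MeasurableSpace V] (μ : Measure V) (x : V) : ℂ :=
  ∫ z, (𝐞 ⟪x, z⟫ : ℂ) ∂μ

section FourierMeasure

variable {V : Type*} [NormedAddCommGroup V] [InnerProductSpace ℝ V] [FiniteDimensional ℝ V]
  [MeasurableSpace V] [BorelSpace V]

theorem integral_fourierChar_mul_fourier (φ : SchwartzMap V ℂ) (z : V) :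
    ∫ x, (𝐞 ⟪x, z⟫ : ℂ) * 𝓕 (⇑φ) x = φ z := by
  calc _ = 𝓕⁻ (𝓕 (⇑φ)) z := by simp only [Real.fourierInv_eq, Circle.smul_def, smul_eq_mul]
    _ = φ z := by
      rw [← SchwartzMap.fourier_coe, ← SchwartzMap.fourierInv_coe,
        FourierTransform.fourierInv_fourier_eq]

theorem integral_fourierInvMeasure_mul_fourier (μ : Measure V) [IsFiniteMeasure μ]
    (φ : SchwartzMap V ℂ) :
    ∫ x, fourierInvMeasure μ x * 𝓕 (⇑φ) x = ∫ z, φ z ∂μ := by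
  have hint : Integrable (Function.uncurry fun x z => (𝐞 ⟪x, z⟫ : ℂ) * 𝓕 (⇑φ) x)
      (volume.prod μ) := by
    refine Integrable.mono' ((𝓕 φ).integrable.norm.comp_fst μ) ?_ (ae_of_all _ fun p => ?_)
    · rw [← SchwartzMap.fourier_coe]; fun_prop
    · rw [Function.uncurry_apply_pair, norm_mul, Circle.norm_coe, one_mul,
        SchwartzMap.fourier_coe]
  simp only [fourierInvMeasure, ← integral_mul_const]
  rw [integral_integral_swap hint]
  simp only [integral_fourierChar_mul_fourier]

end FourierMeasure

theorem map_symm_map_linearIsometryEquiv_eq {V W : Type*}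
    [NormedAddCommGroup V] [NormedSpace ℝ V] [MeasurableSpace V] [BorelSpace V]
    [NormedAddCommGroup W] [NormedSpace ℝ W] [MeasurableSpace W] [BorelSpace W]
    (e : V ≃ₗᵢ[ℝ] W) {μ : Measure W} (hrot : ∀ T : W ≃ₗᵢ[ℝ] W, μ.map T = μ)
    (T : V ≃ₗᵢ[ℝ] V) : (μ.map e.symm).map T = μ.map e.symm := by
  have hcomm : T ∘ e.symm = e.symm ∘ (e.symm.trans (T.trans e)) := by ext; simp
  rw [Measure.map_map T.continuous.measurable e.symm.continuous.measurable, hcomm,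
    ← Measure.map_map e.symm.continuous.measurable (LinearIsometryEquiv.continuous _).measurable,
    hrot]

theorem fourierInvMeasure_eq_circleAverage {W : Type*} [NormedAddCommGroup W]
    [InnerProductSpace ℝ W] [MeasurableSpace W] [BorelSpace W]
    (e : ℂ ≃ₗᵢ[ℝ] W) {μ : Measure W} [IsProbabilityMeasure μ] {r : ℝ}
    (hsupp : μ (sphere 0 r)ᶜ = 0) (hrot : ∀ T : W ≃ₗᵢ[ℝ] W, μ.map T = μ) (x : W) :
    fourierInvMeasure μ x = Real.circleAverage (fun z => (𝐞 ⟪e.symm x, z⟫ : ℂ)) 0 r := by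
  have he : Measurable e.symm := e.symm.continuous.measurable
  have : IsProbabilityMeasure (μ.map e.symm) := Measure.isProbabilityMeasure_map he.aemeasurable
  have hsupp' : μ.map e.symm (sphere 0 r)ᶜ = 0 := by
    rw [Measure.map_apply he isClosed_sphere.measurableSet.compl, preimage_compl,
      ← e.symm.coe_toIsometryEquiv, IsometryEquiv.preimage_sphere]
    simpa using hsupp
  rw [← integral_eq_circleAverage_of_map_rotation hsupp'
    (fun a => map_symm_map_linearIsometryEquiv_eq e hrot (rotation a)) (by fun_prop),
    integral_map he.aemeasurable (by fun_prop)]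
  simp [fourierInvMeasure]

end Diffraction

end

open Diffraction

theorem exists_function_with_diffraction_on_circle_general
    (r : ℝ)
    (μ : Measure (EuclideanSpace ℝ (Fin 2))) [IsProbabilityMeasure μ]
    (hsupp : μ (Metric.sphere (0 : EuclideanSpace ℝ (Fin 2)) r)ᶜ = 0)
    (hrot : ∀ T : EuclideanSpace ℝ (Fin 2) ≃ₗᵢ[ℝ] EuclideanSpace ℝ (Fin 2),
      Measure.map T μ = μ) :
    ∃ g : EuclideanSpace ℝ (Fin 2) → ℂ,
      Continuous g ∧ (∃ C : ℝ, ∀ x, ‖g x‖ ≤ C) ∧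
      ∃ η : EuclideanSpace ℝ (Fin 2) → ℂ,
        (∀ x : EuclideanSpace ℝ (Fin 2),
          Tendsto
            (fun R : ℝ =>
              (∫ y in Metric.closedBall (0 : EuclideanSpace ℝ (Fin 2)) R,
                  g y * (starRingEnd ℂ) (g (y - x))) /
                ((Real.pi * R ^ 2 : ℝ) : ℂ))
            atTop (𝓝 (η x))) ∧
        (∀ φ : SchwartzMap (EuclideanSpace ℝ (Fin 2)) ℂ,
          ∫ x, η x * 𝓕 (⇑φ) x = ∫ y, φ y ∂μ) := by
  refine ⟨sphericalWave r, continuous_sphericalWave r, ⟨1, fun y => (norm_sphericalWave r y).le⟩,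
    fourierInvMeasure μ, fun x => ?_, integral_fourierInvMeasure_mul_fourier μ⟩
  let e : ℂ ≃ₗᵢ[ℝ] EuclideanSpace ℝ (Fin 2) := Complex.orthonormalBasisOneI.repr
  have hwave : sphericalWave r ∘ e = sphericalWave r := by
    ext z; simp [sphericalWave]
  have hlim := tendsto_ballAutocorrelation_sphericalWave r (e.symm x)
  rw [← hwave, ← fourierInvMeasure_eq_circleAverage e hsupp hrot] at hlim
  exact hlim.congr (ballAutocorrelation_comp_linearIsometryEquiv e _ x)

/-- Affirmative answer to Strungaru's question in the plane: for every `r > 0` there is a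
bounded continuous function `g : ℝ² → ℂ` whose natural autocorrelation `η` exists
pointwise and whose diffraction (the distributional Fourier transform of `η`) is the
uniform probability measure `μ_r` on the circle of radius `r`. -/
theorem exists_function_with_diffraction_on_circle
    (r : ℝ) (hr : 0 < r)
    (μ : Measure (EuclideanSpace ℝ (Fin 2))) [IsProbabilityMeasure μ]
    (hsupp : μ (Metric.sphere (0 : EuclideanSpace ℝ (Fin 2)) r)ᶜ = 0)
    (hrot : ∀ T : EuclideanSpace ℝ (Fin 2) ≃ₗᵢ[ℝ] EuclideanSpace ℝ (Fin 2),
      Measure.map T μ = μ) :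
    ∃ g : EuclideanSpace ℝ (Fin 2) → ℂ,
      Continuous g ∧ (∃ C : ℝ, ∀ x, ‖g x‖ ≤ C) ∧
      ∃ η : EuclideanSpace ℝ (Fin 2) → ℂ,
        (∀ x : EuclideanSpace ℝ (Fin 2),
          Tendsto
            (fun R : ℝ =>
              (∫ y in Metric.closedBall (0 : EuclideanSpace ℝ (Fin 2)) R,
                  g y * (starRingEnd ℂ) (g (y - x))) /
                ((Real.pi * R ^ 2 : ℝ) : ℂ))
            atTop (𝓝 (η x))) ∧
        (∀ φ : SchwartzMap (EuclideanSpace ℝ (Fin 2)) ℂ,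
          ∫ x, η x * 𝓕 (⇑φ) x = ∫ y, φ y ∂μ) :=
  exists_function_with_diffraction_on_circle_general r μ hsupp hrot
end
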